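/- Let H be a finite-dimensional biperfect weak Hopf algebra over a field k with invertible weak antipode T, let {e_1, …, e_n} be a basis of H with dual basis {e_1*, …, e_n*} in H*, and in D(H) ⊗ D(H) set R = Σ_{i=1}^n (ε ∞ e_i) ⊗ (e_i* ∞ 1) and R̄ = Σ_{i=1}^n (ε ∞ e_i) ⊗ ((e_i* ∘ T) ∞ 1). Then R R̄ R = R and R̄ R R̄ = R̄; that is, R is a von Neumann regular element of the algebra D(H) ⊗ D(H) with generalized inverse R̄. -/

import Mathlib

noncomputable section

open TensorProduct

/-- The data of a (weak) bialgebra on a `k`-vector space `H`: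
multiplication, unit, comultiplication and counit, all as linear maps. -/
structure BialgData (k : Type) [Field k] (H : Type) [AddCommGroup H] [Module k H] where
  mul : H ⊗[k] H →ₗ[k] H
  one : H
  comul : H →ₗ[k] H ⊗[k] H
  counit : H →ₗ[k] k

namespace BialgData

variable {k : Type} [Field k] {H : Type} [AddCommGroup H] [Module k H]

/-- The axioms making `BialgData` an honest bialgebra. -/
structure IsBialgebra (B : BialgData k H) : Prop where
  mul_assoc : ∀ x y z : H, B.mul (B.mul (x ⊗ₜ y) ⊗ₜ z) = B.mul (x ⊗ₜ B.mul (y ⊗ₜ z))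
  one_mul : ∀ x : H, B.mul (B.one ⊗ₜ x) = x
  mul_one : ∀ x : H, B.mul (x ⊗ₜ B.one) = x
  coassoc : ∀ x : H,
    (TensorProduct.assoc k H H H) ((TensorProduct.map B.comul LinearMap.id) (B.comul x))
      = (TensorProduct.map LinearMap.id B.comul) (B.comul x)
  counit_comul : ∀ x : H,
    (TensorProduct.lid k H) ((TensorProduct.map B.counit LinearMap.id) (B.comul x)) = x
  comul_counit : ∀ x : H,
    (TensorProduct.rid k H) ((TensorProduct.map LinearMap.id B.counit) (B.comul x)) = x
  comul_mul : ∀ x y : H,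
    B.comul (B.mul (x ⊗ₜ y)) =
      (TensorProduct.map B.mul B.mul)
        ((TensorProduct.tensorTensorTensorComm k H H H H) (B.comul x ⊗ₜ B.comul y))
  comul_one : B.comul B.one = B.one ⊗ₜ B.one
  counit_mul : ∀ x y : H, B.counit (B.mul (x ⊗ₜ y)) = B.counit x * B.counit y
  counit_one : B.counit B.one = 1

/-- Convolution product of linear endomorphisms: `f ∗ g = mul ∘ (f ⊗ g) ∘ comul`. -/
def conv (B : BialgData k H) (f g : H →ₗ[k] H) : H →ₗ[k] H :=
  B.mul ∘ₗ TensorProduct.map f g ∘ₗ B.comul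

/-- `T` is a weak antipode: `id ∗ T ∗ id = id` and `T ∗ id ∗ T = T`. -/
def IsWeakAntipode (B : BialgData k H) (T : H →ₗ[k] H) : Prop :=
  B.conv (B.conv LinearMap.id T) LinearMap.id = LinearMap.id ∧
    B.conv (B.conv T LinearMap.id) T = T

/-- `T` is an anti-bialgebra morphism: `T(xy) = T(y)T(x)`, `T(1) = 1`,
`Δ(T x) = Σ T(x'') ⊗ T(x')` and `ε ∘ T = ε`. -/
def IsAntiBialgebraHom (B : BialgData k H) (T : H →ₗ[k] H) : Prop :=
  (∀ x y : H, T (B.mul (x ⊗ₜ y)) = B.mul (T y ⊗ₜ T x)) ∧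
  T B.one = B.one ∧
  (∀ x : H, B.comul (T x) =
    (TensorProduct.comm k H H) ((TensorProduct.map T T) (B.comul x))) ∧
  ∀ x : H, B.counit (T x) = B.counit x

/-- `H` is perfect: `T` is an anti-bialgebra morphism and `(id ∗ T)(H) ⊆ C(H)`,
i.e. `Σ x'T(x'')` is central for every `x`. -/
def Perfect (B : BialgData k H) (T : H →ₗ[k] H) : Prop :=
  B.IsAntiBialgebraHom T ∧
    ∀ x y : H,
      B.mul ((B.conv LinearMap.id T) x ⊗ₜ y) = B.mul (y ⊗ₜ (B.conv LinearMap.id T) x)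

/-- `H` is coperfect: `T` is an anti-bialgebra morphism and
`Σ x'T(x'') ⊗ x''' = Σ x''T(x''') ⊗ x'` for every `x`. -/
def Coperfect (B : BialgData k H) (T : H →ₗ[k] H) : Prop :=
  B.IsAntiBialgebraHom T ∧
    ∀ x : H,
      (TensorProduct.map (B.conv LinearMap.id T) LinearMap.id) (B.comul x)
        = (TensorProduct.comm k H H)
            ((TensorProduct.map LinearMap.id (B.conv LinearMap.id T)) (B.comul x))

/-- `H` is biperfect: perfect and coperfect. -/
def Biperfect (B : BialgData k H) (T : H →ₗ[k] H) : Prop :=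
  B.Perfect T ∧ B.Coperfect T

/-- The opposite bialgebra `H^op`: same coalgebra, opposite multiplication. -/
def op (B : BialgData k H) : BialgData k H :=
  { B with mul := B.mul ∘ₗ (TensorProduct.comm k H H).toLinearMap }

/-- The co-opposite bialgebra `H^cop`: same algebra, opposite comultiplication. -/
def cop (B : BialgData k H) : BialgData k H :=
  { B with comul := (TensorProduct.comm k H H).toLinearMap ∘ₗ B.comul }

/-- `H` is commutative. -/
def Commutative (B : BialgData k H) : Prop :=
  ∀ x y : H, B.mul (x ⊗ₜ y) = B.mul (y ⊗ₜ x)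

/-- `H` is cocommutative. -/
def Cocommutative (B : BialgData k H) : Prop :=
  ∀ x : H, (TensorProduct.comm k H H) (B.comul x) = B.comul x

/-- The dual weak Hopf algebra structure on `H* = Module.Dual k H` (for `H` finite
dimensional): convolution multiplication `(fg)(x) = Σ f(x')g(x'')`, unit `ε`,
comultiplication dual to the multiplication of `H`, counit `f ↦ f 1`. -/
def dual (B : BialgData k H) [FiniteDimensional k H] :
    BialgData k (Module.Dual k H) where
  mul := B.comul.dualMap ∘ₗ TensorProduct.dualDistrib k H H
  one := B.counit
  comul := ((TensorProduct.dualDistribEquiv k H H).symm :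
      Module.Dual k (H ⊗[k] H) →ₗ[k] Module.Dual k H ⊗[k] Module.Dual k H) ∘ₗ
    B.mul.dualMap
  counit := Module.Dual.eval k H B.one

section Reshuffle

variable (k)
variable (M N P : Type) [AddCommGroup M] [AddCommGroup N] [AddCommGroup P]
  [Module k M] [Module k N] [Module k P]

/-- `(u ⊗ v) ⊗ w ↦ (u ⊗ w) ⊗ v`. -/
def swap23 : (M ⊗[k] N) ⊗[k] P →ₗ[k] (M ⊗[k] P) ⊗[k] N :=
  ((TensorProduct.assoc k M P N).symm : M ⊗[k] (P ⊗[k] N) →ₗ[k] (M ⊗[k] P) ⊗[k] N) ∘ₗ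
    (TensorProduct.map LinearMap.id ((TensorProduct.comm k N P) : N ⊗[k] P →ₗ[k] P ⊗[k] N)) ∘ₗ
      ((TensorProduct.assoc k M N P) : (M ⊗[k] N) ⊗[k] P →ₗ[k] M ⊗[k] (N ⊗[k] P))

/-- `(u ⊗ v) ⊗ w ↦ (w ⊗ u) ⊗ v`. -/
def rot3 : (M ⊗[k] N) ⊗[k] P →ₗ[k] (P ⊗[k] M) ⊗[k] N :=
  ((TensorProduct.assoc k P M N).symm : P ⊗[k] (M ⊗[k] N) →ₗ[k] (P ⊗[k] M) ⊗[k] N) ∘ₗ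
    ((TensorProduct.comm k (M ⊗[k] N) P) : (M ⊗[k] N) ⊗[k] P →ₗ[k] P ⊗[k] (M ⊗[k] N))

end Reshuffle

/-- The iterated comultiplication `x ↦ (x' ⊗ x'') ⊗ x'''`. -/
def comul2 (B : BialgData k H) : H →ₗ[k] (H ⊗[k] H) ⊗[k] H :=
  (TensorProduct.map B.comul LinearMap.id) ∘ₗ B.comul

/-- The convolution multiplication on `H*`: `(fg)(x) = Σ f(x') g(x'')`. -/
def dualMul (B : BialgData k H) :
    Module.Dual k H ⊗[k] Module.Dual k H →ₗ[k] Module.Dual k H :=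
  B.comul.dualMap ∘ₗ TensorProduct.dualDistrib k H H

/-- The comultiplication on `H*` dual to the multiplication of `H`. -/
def dualComul (B : BialgData k H) [FiniteDimensional k H] :
    Module.Dual k H →ₗ[k] Module.Dual k H ⊗[k] Module.Dual k H :=
  ((TensorProduct.dualDistribEquiv k H H).symm :
      Module.Dual k (H ⊗[k] H) →ₗ[k] Module.Dual k H ⊗[k] Module.Dual k H) ∘ₗ
    B.mul.dualMap

/-- `u ⊗ v ↦ (x ↦ T⁻¹(u) · x · v)`, where `Tinv = T⁻¹`. -/
def conjLin (B : BialgData k H) (Tinv : H →ₗ[k] H) : H ⊗[k] H →ₗ[k] (H →ₗ[k] H) :=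
  TensorProduct.lift
    ((((LinearMap.llcomp k H H H) ∘ₗ (TensorProduct.curry B.mul).flip).compl₂
        ((TensorProduct.curry B.mul) ∘ₗ Tinv)).flip)

/-- `g ⊗ (u ⊗ v) ↦ g(T⁻¹(u) · ? · v)`. -/
def dualConj (B : BialgData k H) (Tinv : H →ₗ[k] H) :
    Module.Dual k H ⊗[k] (H ⊗[k] H) →ₗ[k] Module.Dual k H :=
  (TensorProduct.lift (LinearMap.llcomp k H H k)) ∘ₗ
    (TensorProduct.map LinearMap.id (B.conjLin Tinv))

/-- `a ↦ (a''' ⊗ a') ⊗ a''`. -/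
def comul2rot (B : BialgData k H) : H →ₗ[k] (H ⊗[k] H) ⊗[k] H :=
  (BialgData.rot3 k H H H) ∘ₗ B.comul2

/-- The multiplication of the quantum double `D(H) = H^{*cop} ∞ H`:
`(f ∞ a)(g ∞ b) = Σ f · g(T⁻¹(a''') ? a') ∞ a'' b`. -/
def doubleMul (B : BialgData k H) (Tinv : H →ₗ[k] H) :
    (Module.Dual k H ⊗[k] H) ⊗[k] (Module.Dual k H ⊗[k] H) →ₗ[k]
      Module.Dual k H ⊗[k] H :=
  (TensorProduct.map (B.dualMul) B.mul) ∘ₗ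
  (TensorProduct.map ((TensorProduct.comm k (Module.Dual k H) (Module.Dual k H)) :
      Module.Dual k H ⊗[k] Module.Dual k H →ₗ[k] Module.Dual k H ⊗[k] Module.Dual k H)
    (LinearMap.id : H ⊗[k] H →ₗ[k] H ⊗[k] H)) ∘ₗ
  ((TensorProduct.tensorTensorTensorComm k (Module.Dual k H) H (Module.Dual k H) H) :
    (Module.Dual k H ⊗[k] H) ⊗[k] (Module.Dual k H ⊗[k] H) →ₗ[k]
      (Module.Dual k H ⊗[k] Module.Dual k H) ⊗[k] (H ⊗[k] H)) ∘ₗ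
  (TensorProduct.map
    ((TensorProduct.map (B.dualConj Tinv) LinearMap.id) ∘ₗ
      ((TensorProduct.assoc k (Module.Dual k H) (H ⊗[k] H) H).symm :
        Module.Dual k H ⊗[k] ((H ⊗[k] H) ⊗[k] H) →ₗ[k]
          (Module.Dual k H ⊗[k] (H ⊗[k] H)) ⊗[k] H))
    (LinearMap.id : Module.Dual k H ⊗[k] H →ₗ[k] Module.Dual k H ⊗[k] H)) ∘ₗ
  ((TensorProduct.tensorTensorTensorComm k (Module.Dual k H) (Module.Dual k H)
      ((H ⊗[k] H) ⊗[k] H) H) :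
    (Module.Dual k H ⊗[k] Module.Dual k H) ⊗[k] (((H ⊗[k] H) ⊗[k] H) ⊗[k] H) →ₗ[k]
      (Module.Dual k H ⊗[k] ((H ⊗[k] H) ⊗[k] H)) ⊗[k] (Module.Dual k H ⊗[k] H)) ∘ₗ
  (TensorProduct.map (LinearMap.id : Module.Dual k H ⊗[k] Module.Dual k H →ₗ[k]
      Module.Dual k H ⊗[k] Module.Dual k H)
    (TensorProduct.map B.comul2rot (LinearMap.id : H →ₗ[k] H))) ∘ₗ
  (TensorProduct.map ((TensorProduct.comm k (Module.Dual k H) (Module.Dual k H)) :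
      Module.Dual k H ⊗[k] Module.Dual k H →ₗ[k] Module.Dual k H ⊗[k] Module.Dual k H)
    (LinearMap.id : H ⊗[k] H →ₗ[k] H ⊗[k] H)) ∘ₗ
  ((TensorProduct.tensorTensorTensorComm k (Module.Dual k H) H (Module.Dual k H) H) :
    (Module.Dual k H ⊗[k] H) ⊗[k] (Module.Dual k H ⊗[k] H) →ₗ[k]
      (Module.Dual k H ⊗[k] Module.Dual k H) ⊗[k] (H ⊗[k] H))

/-- The comultiplication of the quantum double `D(H) = H^{*cop} ∞ H`, using the
coproduct of `H^{*cop}` on the first factor. -/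
def doubleComul (B : BialgData k H) [FiniteDimensional k H] :
    Module.Dual k H ⊗[k] H →ₗ[k]
      (Module.Dual k H ⊗[k] H) ⊗[k] (Module.Dual k H ⊗[k] H) :=
  ((TensorProduct.tensorTensorTensorComm k (Module.Dual k H) (Module.Dual k H) H H) :
      (Module.Dual k H ⊗[k] Module.Dual k H) ⊗[k] (H ⊗[k] H) →ₗ[k]
        (Module.Dual k H ⊗[k] H) ⊗[k] (Module.Dual k H ⊗[k] H)) ∘ₗ
    (TensorProduct.map
      (((TensorProduct.comm k (Module.Dual k H) (Module.Dual k H)) :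
          Module.Dual k H ⊗[k] Module.Dual k H →ₗ[k]
            Module.Dual k H ⊗[k] Module.Dual k H) ∘ₗ B.dualComul)
      B.comul)

/-- The unit `ε ∞ 1` of the quantum double. -/
def doubleOne (B : BialgData k H) : Module.Dual k H ⊗[k] H :=
  B.counit ⊗ₜ B.one

/-- Componentwise multiplication on `D(H) ⊗ D(H)`. -/
def doubleMul2 (B : BialgData k H) (Tinv : H →ₗ[k] H) :
    ((Module.Dual k H ⊗[k] H) ⊗[k] (Module.Dual k H ⊗[k] H)) ⊗[k]
        ((Module.Dual k H ⊗[k] H) ⊗[k] (Module.Dual k H ⊗[k] H)) →ₗ[k]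
      (Module.Dual k H ⊗[k] H) ⊗[k] (Module.Dual k H ⊗[k] H) :=
  (TensorProduct.map (B.doubleMul Tinv) (B.doubleMul Tinv)) ∘ₗ
    ((TensorProduct.tensorTensorTensorComm k (Module.Dual k H ⊗[k] H)
        (Module.Dual k H ⊗[k] H) (Module.Dual k H ⊗[k] H) (Module.Dual k H ⊗[k] H)) :
      ((Module.Dual k H ⊗[k] H) ⊗[k] (Module.Dual k H ⊗[k] H)) ⊗[k]
          ((Module.Dual k H ⊗[k] H) ⊗[k] (Module.Dual k H ⊗[k] H)) →ₗ[k]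
        ((Module.Dual k H ⊗[k] H) ⊗[k] (Module.Dual k H ⊗[k] H)) ⊗[k]
          ((Module.Dual k H ⊗[k] H) ⊗[k] (Module.Dual k H ⊗[k] H)))

/-- Componentwise multiplication on `D(H) ⊗ D(H) ⊗ D(H)` (associated to the left). -/
def doubleMul3 (B : BialgData k H) (Tinv : H →ₗ[k] H) :
    (((Module.Dual k H ⊗[k] H) ⊗[k] (Module.Dual k H ⊗[k] H)) ⊗[k]
          (Module.Dual k H ⊗[k] H)) ⊗[k]
        (((Module.Dual k H ⊗[k] H) ⊗[k] (Module.Dual k H ⊗[k] H)) ⊗[k]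
          (Module.Dual k H ⊗[k] H)) →ₗ[k]
      ((Module.Dual k H ⊗[k] H) ⊗[k] (Module.Dual k H ⊗[k] H)) ⊗[k]
        (Module.Dual k H ⊗[k] H) :=
  (TensorProduct.map (B.doubleMul2 Tinv) (B.doubleMul Tinv)) ∘ₗ
    ((TensorProduct.tensorTensorTensorComm k
        ((Module.Dual k H ⊗[k] H) ⊗[k] (Module.Dual k H ⊗[k] H)) (Module.Dual k H ⊗[k] H)
        ((Module.Dual k H ⊗[k] H) ⊗[k] (Module.Dual k H ⊗[k] H)) (Module.Dual k H ⊗[k] H)) :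
      (((Module.Dual k H ⊗[k] H) ⊗[k] (Module.Dual k H ⊗[k] H)) ⊗[k]
            (Module.Dual k H ⊗[k] H)) ⊗[k]
          (((Module.Dual k H ⊗[k] H) ⊗[k] (Module.Dual k H ⊗[k] H)) ⊗[k]
            (Module.Dual k H ⊗[k] H)) →ₗ[k]
        (((Module.Dual k H ⊗[k] H) ⊗[k] (Module.Dual k H ⊗[k] H)) ⊗[k]
            ((Module.Dual k H ⊗[k] H) ⊗[k] (Module.Dual k H ⊗[k] H))) ⊗[k]
          ((Module.Dual k H ⊗[k] H) ⊗[k] (Module.Dual k H ⊗[k] H)))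

end BialgData

section Pairing

open BialgData

variable {k : Type} [Field k] {X A : Type}
  [AddCommGroup X] [Module k X] [AddCommGroup A] [Module k A]

/-- A weak Hopf pair `(X, A)`: a nondegenerate bilinear form `⟨·,·⟩ : X × A → k`
satisfying `⟨x, ab⟩ = Σ ⟨x', a⟩⟨x'', b⟩`, `⟨x, 1⟩ = ε(x)`,
`⟨xy, a⟩ = Σ ⟨x, a'⟩⟨y, a''⟩`, `⟨1, a⟩ = ε(a)` and `⟨S_X x, a⟩ = ⟨x, S_A a⟩`. -/
structure IsWeakHopfPair (BX : BialgData k X) (BA : BialgData k A)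
    (SX : X →ₗ[k] X) (SA : A →ₗ[k] A) (p : X →ₗ[k] A →ₗ[k] k) : Prop where
  nondegen_left : ∀ x : X, (∀ a : A, p x a = 0) → x = 0
  nondegen_right : ∀ a : A, (∀ x : X, p x a = 0) → a = 0
  pair_mul_right : ∀ (x : X) (a b : A),
    p x (BA.mul (a ⊗ₜ b)) =
      (TensorProduct.lid k k) ((TensorProduct.map (p.flip a) (p.flip b)) (BX.comul x))
  pair_one_right : ∀ x : X, p x BA.one = BX.counit x
  pair_mul_left : ∀ (x y : X) (a : A),
    p (BX.mul (x ⊗ₜ y)) a =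
      (TensorProduct.lid k k) ((TensorProduct.map (p x) (p y)) (BA.comul a))
  pair_one_left : ∀ a : A, p BX.one a = BA.counit a
  pair_antipode : ∀ (x : X) (a : A), p (SX x) a = p x (SA a)

/-- A weak Hopf skew-pair `(X, A)` (with `S_A` invertible, with inverse `SAinv`):
as a weak Hopf pair but with `⟨x, ab⟩ = Σ ⟨x'', a⟩⟨x', b⟩` and
`⟨S_X x, a⟩ = ⟨x, S_A⁻¹ a⟩`. -/
structure IsWeakHopfSkewPair (BX : BialgData k X) (BA : BialgData k A)
    (SX : X →ₗ[k] X) (SAinv : A →ₗ[k] A) (p : X →ₗ[k] A →ₗ[k] k) : Prop where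
  nondegen_left : ∀ x : X, (∀ a : A, p x a = 0) → x = 0
  nondegen_right : ∀ a : A, (∀ x : X, p x a = 0) → a = 0
  pair_mul_right : ∀ (x : X) (a b : A),
    p x (BA.mul (a ⊗ₜ b)) =
      (TensorProduct.lid k k) ((TensorProduct.map (p.flip b) (p.flip a)) (BX.comul x))
  pair_one_right : ∀ x : X, p x BA.one = BX.counit x
  pair_mul_left : ∀ (x y : X) (a : A),
    p (BX.mul (x ⊗ₜ y)) a =
      (TensorProduct.lid k k) ((TensorProduct.map (p x) (p y)) (BA.comul a))
  pair_one_left : ∀ a : A, p BX.one a = BA.counit a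
  pair_antipode : ∀ (x : X) (a : A), p (SX x) a = p x (SAinv a)

variable (BX : BialgData k X) (BA : BialgData k A)
  (SX : X →ₗ[k] X) (SAinv : A →ₗ[k] A) (p : X →ₗ[k] A →ₗ[k] k)

/-- Auxiliary map `x ↦ Σ ⟨x' · S_X(x'''), ·⟩ ⊗ x'' ∈ A* ⊗ X`. -/
def lactAux : X →ₗ[k] Module.Dual k A ⊗[k] X :=
  (TensorProduct.map (p ∘ₗ BX.mul ∘ₗ TensorProduct.map LinearMap.id SX) LinearMap.id) ∘ₗ
    (BialgData.swap23 k X X X) ∘ₗ BX.comul2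

/-- The left action `a ▷ x = Σ ⟨x' · S_X(x'''), a⟩ x''` of `A` on `X`,
as a linear map `A ⊗ X → X`. -/
def lact : A ⊗[k] X →ₗ[k] X :=
  ((TensorProduct.lid k X) : k ⊗[k] X →ₗ[k] X) ∘ₗ
    (TensorProduct.map (contractLeft k A) LinearMap.id) ∘ₗ
      (TensorProduct.map ((TensorProduct.comm k A (Module.Dual k A)) :
          A ⊗[k] Module.Dual k A →ₗ[k] Module.Dual k A ⊗[k] A) LinearMap.id) ∘ₗ
        ((TensorProduct.assoc k A (Module.Dual k A) X).symm :
          A ⊗[k] (Module.Dual k A ⊗[k] X) →ₗ[k] (A ⊗[k] Module.Dual k A) ⊗[k] X) ∘ₗ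
          (TensorProduct.map LinearMap.id (lactAux BX SX p))

/-- Auxiliary map `a ↦ Σ ⟨·, S_A⁻¹(a''') · a'⟩ ⊗ a'' ∈ X* ⊗ A`. -/
def ractAux : A →ₗ[k] Module.Dual k X ⊗[k] A :=
  (TensorProduct.map (p.flip ∘ₗ BA.mul ∘ₗ TensorProduct.map SAinv LinearMap.id)
      LinearMap.id) ∘ₗ
    (BialgData.rot3 k A A A) ∘ₗ BA.comul2

/-- The right action `a ◁ x = Σ ⟨x, S_A⁻¹(a''') a'⟩ a''` of `X` on `A`,
as a linear map `A ⊗ X → A`. -/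
def ract : A ⊗[k] X →ₗ[k] A :=
  ((TensorProduct.lid k A) : k ⊗[k] A →ₗ[k] A) ∘ₗ
    (TensorProduct.map (contractLeft k X) LinearMap.id) ∘ₗ
      (BialgData.swap23 k (Module.Dual k X) A X) ∘ₗ
        (TensorProduct.map (ractAux BA SAinv p) LinearMap.id)

end Pairing

/-!
The map `H* ⊗ H → D(H) ⊗ D(H)`, `f ⊗ a ↦ (ε ∞ a) ⊗ (f ∞ 1)`, is multiplicative for the
componentwise product on `H* ⊗ H`: on `ε ∞ H` the double multiplies as `H`, because
`ε(T⁻¹(a''') x a') = ε(a''') ε(x) ε(a')` once `ε ∘ T⁻¹ = ε`, and on `H* ∞ 1` it multiplies as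
`H*` because `T⁻¹(1) = 1`. Under `H* ⊗ H ≅ End(H)` the componentwise product becomes
convolution, and `R`, `R̄` correspond to `id` and `T`. So `R R̄ R = R` and `R̄ R R̄ = R̄` are the
weak antipode axioms `id ∗ T ∗ id = id` and `T ∗ id ∗ T = T`.
-/

lemma Module.Basis.dualTensorHom_sum_coord_comp_tmul {k M N ι : Type} [Field k]
    [AddCommGroup M] [Module k M] [AddCommGroup N] [Module k N] [Fintype ι]
    (b : Module.Basis ι k N) (f : M →ₗ[k] N) :
    dualTensorHom k M N (∑ i, (b.coord i ∘ₗ f) ⊗ₜ b i) = f := by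
  ext x
  simp [dualTensorHom_apply, b.sum_repr]

namespace BialgData

variable {k : Type} [Field k] {H : Type} [AddCommGroup H] [Module k H] (B : BialgData k H)

lemma conv_add_left (f f' g : H →ₗ[k] H) :
    B.conv (f + f') g = B.conv f g + B.conv f' g := by
  ext x
  simp [conv, TensorProduct.map_add_left]

lemma conv_add_right (f g g' : H →ₗ[k] H) :
    B.conv f (g + g') = B.conv f g + B.conv f g' := by
  ext x
  simp [conv, TensorProduct.map_add_right]

lemma conv_dualTensorHom_tmul (f g : Module.Dual k H) (a b : H) :
    B.conv (dualTensorHom k H H (f ⊗ₜ a)) (dualTensorHom k H H (g ⊗ₜ b))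
      = dualTensorHom k H H (B.dualMul (f ⊗ₜ g) ⊗ₜ B.mul (a ⊗ₜ b)) := by
  have h : TensorProduct.map (dualTensorHom k H H (f ⊗ₜ a)) (dualTensorHom k H H (g ⊗ₜ b))
      = (TensorProduct.dualDistrib k H H (f ⊗ₜ g)).smulRight (a ⊗ₜ[k] b) :=
    TensorProduct.ext' fun x y => by
      simp [TensorProduct.dualDistrib_apply, TensorProduct.smul_tmul', mul_smul, smul_comm (g y)]
  ext x
  simp [conv, dualMul, h]

lemma dualConj_tmul_apply (Tinv : H →ₗ[k] H) (g : Module.Dual k H) (u v x : H) :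
    B.dualConj Tinv (g ⊗ₜ (u ⊗ₜ v)) x = g (B.mul (B.mul (Tinv u ⊗ₜ x) ⊗ₜ v)) := by
  simp [dualConj, conjLin]

def counitCounitLeft : (H ⊗[k] H) ⊗[k] H →ₗ[k] H :=
  (TensorProduct.lid k H).toLinearMap ∘ₗ TensorProduct.map
    ((TensorProduct.lid k k).toLinearMap ∘ₗ TensorProduct.map B.counit B.counit) LinearMap.id

@[simp]
lemma counitCounitLeft_tmul (u v w : H) :
    B.counitCounitLeft ((u ⊗ₜ v) ⊗ₜ w) = (B.counit u * B.counit v) • w := by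
  simp [counitCounitLeft]

def tensorToDoubleTensor :
    Module.Dual k H ⊗[k] H →ₗ[k] (Module.Dual k H ⊗[k] H) ⊗[k] (Module.Dual k H ⊗[k] H) :=
  TensorProduct.map (TensorProduct.mk k (Module.Dual k H) H B.counit)
      ((TensorProduct.mk k (Module.Dual k H) H).flip B.one) ∘ₗ
    (TensorProduct.comm k (Module.Dual k H) H).toLinearMap

@[simp]
lemma tensorToDoubleTensor_tmul (f : Module.Dual k H) (a : H) :
    B.tensorToDoubleTensor (f ⊗ₜ a) = (B.counit ⊗ₜ a) ⊗ₜ (f ⊗ₜ B.one) :=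
  rfl

def dualTensorMul :
    (Module.Dual k H ⊗[k] H) ⊗[k] (Module.Dual k H ⊗[k] H) →ₗ[k] Module.Dual k H ⊗[k] H :=
  TensorProduct.map B.dualMul B.mul ∘ₗ
    (TensorProduct.tensorTensorTensorComm k (Module.Dual k H) H (Module.Dual k H) H).toLinearMap

@[simp]
lemma dualTensorMul_tmul (f g : Module.Dual k H) (a b : H) :
    B.dualTensorMul ((f ⊗ₜ a) ⊗ₜ (g ⊗ₜ b)) = B.dualMul (f ⊗ₜ g) ⊗ₜ B.mul (a ⊗ₜ b) :=
  rfl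

lemma dualTensorHom_dualTensorMul (u v : Module.Dual k H ⊗[k] H) :
    dualTensorHom k H H (B.dualTensorMul (u ⊗ₜ v))
      = B.conv (dualTensorHom k H H u) (dualTensorHom k H H v) := by
  induction u using TensorProduct.induction_on with
  | zero => ext; simp [conv]
  | add u₁ u₂ h₁ h₂ =>
    rw [TensorProduct.add_tmul, map_add, map_add, h₁, h₂, map_add, conv_add_left]
  | tmul f a =>
    induction v using TensorProduct.induction_on with
    | zero => ext; simp [conv]
    | add v₁ v₂ h₁ h₂ =>
      rw [TensorProduct.tmul_add, map_add, map_add, h₁, h₂, map_add, conv_add_right]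
    | tmul g b => rw [dualTensorMul_tmul, conv_dualTensorHom_tmul]

variable {B} {Tinv : H →ₗ[k] H}

lemma dualMul_counit_tmul (hB : B.IsBialgebra) (f : Module.Dual k H) :
    B.dualMul (B.counit ⊗ₜ f) = f := by
  have h : TensorProduct.dualDistrib k H H (B.counit ⊗ₜ f)
      = f ∘ₗ TensorProduct.lid k H ∘ₗ TensorProduct.map B.counit LinearMap.id :=
    TensorProduct.ext' fun x y => by simp [TensorProduct.dualDistrib_apply]
  ext x
  simp only [dualMul, LinearMap.comp_apply, LinearMap.dualMap_apply, h]
  rw [LinearEquiv.coe_coe, hB.counit_comul]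

lemma counitCounitLeft_comul2rot (hB : B.IsBialgebra) (a : H) :
    B.counitCounitLeft (B.comul2rot a) = a := by
  have hrot : B.counitCounitLeft ∘ₗ rot3 k H H H
      = (TensorProduct.rid k H).toLinearMap ∘ₗ TensorProduct.map
          ((TensorProduct.lid k H).toLinearMap ∘ₗ TensorProduct.map B.counit LinearMap.id)
          B.counit :=
    TensorProduct.ext_threefold fun x y z => by simp [rot3, smul_smul, mul_comm]
  have hcounit : (TensorProduct.lid k H).toLinearMap ∘ₗ
      TensorProduct.map B.counit LinearMap.id ∘ₗ B.comul = LinearMap.id :=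
    LinearMap.ext hB.counit_comul
  calc B.counitCounitLeft (B.comul2rot a)
      = (B.counitCounitLeft ∘ₗ rot3 k H H H)
          (TensorProduct.map B.comul LinearMap.id (B.comul a)) := rfl
    _ = a := by
        rw [hrot, LinearMap.comp_apply, TensorProduct.map_map, LinearMap.comp_assoc, hcounit,
          LinearMap.comp_id]
        exact hB.comul_counit a

lemma dualConj_counit_tmul (hB : B.IsBialgebra) (hε : ∀ x, B.counit (Tinv x) = B.counit x)
    (u v : H) :
    B.dualConj Tinv (B.counit ⊗ₜ (u ⊗ₜ v)) = (B.counit u * B.counit v) • B.counit := by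
  ext x
  rw [dualConj_tmul_apply, hB.counit_mul, hB.counit_mul, hε, LinearMap.smul_apply, smul_eq_mul]
  ring

lemma map_dualConj_assoc_symm_counit_tmul (hB : B.IsBialgebra)
    (hε : ∀ x, B.counit (Tinv x) = B.counit x) (W : (H ⊗[k] H) ⊗[k] H) :
    TensorProduct.map (B.dualConj Tinv) LinearMap.id
        ((TensorProduct.assoc k (Module.Dual k H) (H ⊗[k] H) H).symm (B.counit ⊗ₜ W))
      = B.counit ⊗ₜ B.counitCounitLeft W := by
  have h : TensorProduct.map (B.dualConj Tinv) LinearMap.id ∘ₗ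
        (TensorProduct.assoc k (Module.Dual k H) (H ⊗[k] H) H).symm.toLinearMap ∘ₗ
        TensorProduct.mk k (Module.Dual k H) _ B.counit
      = TensorProduct.mk k (Module.Dual k H) H B.counit ∘ₗ B.counitCounitLeft :=
    TensorProduct.ext_threefold fun u v w => by
      simp [dualConj_counit_tmul hB hε, TensorProduct.smul_tmul]
  exact LinearMap.congr_fun h W

lemma doubleMul_counit_tmul (hB : B.IsBialgebra) (hε : ∀ x, B.counit (Tinv x) = B.counit x)
    (a b : H) :
    B.doubleMul Tinv ((B.counit ⊗ₜ a) ⊗ₜ (B.counit ⊗ₜ b)) = B.counit ⊗ₜ B.mul (a ⊗ₜ b) := by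
  simp only [doubleMul, LinearMap.comp_apply, LinearEquiv.coe_coe,
    TensorProduct.tensorTensorTensorComm_tmul, TensorProduct.map_tmul,
    TensorProduct.comm_tmul, LinearMap.id_coe, id_eq]
  rw [map_dualConj_assoc_symm_counit_tmul hB hε, counitCounitLeft_comul2rot hB]
  simp only [TensorProduct.tensorTensorTensorComm_tmul, TensorProduct.map_tmul,
    LinearEquiv.coe_coe, TensorProduct.comm_tmul, LinearMap.id_coe, id_eq,
    dualMul_counit_tmul hB]

lemma doubleMul_tmul_one (hB : B.IsBialgebra) (hTinv : Tinv B.one = B.one)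
    (f g : Module.Dual k H) :
    B.doubleMul Tinv ((f ⊗ₜ B.one) ⊗ₜ (g ⊗ₜ B.one)) = B.dualMul (f ⊗ₜ g) ⊗ₜ B.one := by
  have hconj : B.dualConj Tinv (g ⊗ₜ (B.one ⊗ₜ B.one)) = g := by
    ext x
    rw [dualConj_tmul_apply, hTinv, hB.one_mul, hB.mul_one]
  have hcomul : B.comul2rot B.one = (B.one ⊗ₜ B.one) ⊗ₜ B.one := by
    simp [comul2rot, comul2, rot3, hB.comul_one]
  simp only [doubleMul, LinearMap.comp_apply, LinearEquiv.coe_coe,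
    TensorProduct.tensorTensorTensorComm_tmul, TensorProduct.map_tmul,
    TensorProduct.comm_tmul, LinearMap.id_coe, id_eq, hcomul, TensorProduct.assoc_symm_tmul,
    hconj, hB.one_mul]

lemma doubleMul2_tensorToDoubleTensor (hB : B.IsBialgebra) (hTinv : Tinv B.one = B.one)
    (hε : ∀ x, B.counit (Tinv x) = B.counit x) (u v : Module.Dual k H ⊗[k] H) :
    B.doubleMul2 Tinv (B.tensorToDoubleTensor u ⊗ₜ B.tensorToDoubleTensor v)
      = B.tensorToDoubleTensor (B.dualTensorMul (u ⊗ₜ v)) := by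
  have h : B.doubleMul2 Tinv ∘ₗ TensorProduct.map B.tensorToDoubleTensor B.tensorToDoubleTensor
      = B.tensorToDoubleTensor ∘ₗ B.dualTensorMul :=
    TensorProduct.ext_fourfold' fun f a g b => by
      simp [doubleMul2, doubleMul_counit_tmul hB hε, doubleMul_tmul_one hB hTinv]
  exact LinearMap.congr_fun h (u ⊗ₜ v)

end BialgData

theorem quantumDouble_quasiRMatrix_vonNeumannRegular_general
    {k : Type} [Field k] {H : Type} [AddCommGroup H] [Module k H]
    [FiniteDimensional k H]
    (B : BialgData k H) (T Tinv : H →ₗ[k] H)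
    (hB : B.IsBialgebra) (hT : B.IsWeakAntipode T)
    (hanti : B.IsAntiBialgebraHom T)
    (hinv₁ : Tinv ∘ₗ T = LinearMap.id) (hinv₂ : T ∘ₗ Tinv = LinearMap.id)
    (ι : Type) [Fintype ι] (b : Module.Basis ι k H)
    (R Rbar : (Module.Dual k H ⊗[k] H) ⊗[k] (Module.Dual k H ⊗[k] H))
    (hR : R = ∑ i : ι, (B.counit ⊗ₜ b i) ⊗ₜ[k] ((b.coord i) ⊗ₜ B.one))
    (hRbar : Rbar = ∑ i : ι,
      (B.counit ⊗ₜ b i) ⊗ₜ[k] (((b.coord i) ∘ₗ T) ⊗ₜ B.one)) :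
    B.doubleMul2 Tinv (B.doubleMul2 Tinv (R ⊗ₜ Rbar) ⊗ₜ R) = R ∧
    B.doubleMul2 Tinv (B.doubleMul2 Tinv (Rbar ⊗ₜ R) ⊗ₜ Rbar) = Rbar := by
  have hTinv_one : Tinv B.one = B.one := by
    simpa [hanti.2.1] using LinearMap.congr_fun hinv₁ B.one
  have hε (x : H) : B.counit (Tinv x) = B.counit x := by
    rw [← hanti.2.2.2, ← LinearMap.comp_apply T, hinv₂, LinearMap.id_apply]
  have hmul := BialgData.doubleMul2_tensorToDoubleTensor hB hTinv_one hε
  set c := ∑ i, (b.coord i ∘ₗ LinearMap.id) ⊗ₜ[k] b i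
  set cT := ∑ i, (b.coord i ∘ₗ T) ⊗ₜ[k] b i
  have hRc : R = B.tensorToDoubleTensor c := by simp [hR, c]
  have hRcT : Rbar = B.tensorToDoubleTensor cT := by simp [hRbar, cT]
  have hinj := (dualTensorHom_bijective (R := k) (M := H) (N := H)).injective
  rw [hRc, hRcT, hmul, hmul, hmul, hmul]
  constructor <;> congr 1 <;> apply hinj <;>
    simp only [BialgData.dualTensorHom_dualTensorMul, c, cT,
      b.dualTensorHom_sum_coord_comp_tmul]
  exacts [hT.1, hT.2]

/-- Proposition 3.3 of the paper.  The quasi-R-matrix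
`R = Σ_i (ε ∞ e_i) ⊗ (e_i* ∞ 1)` is a von Neumann regular element of
`D(H) ⊗ D(H)`, with generalized inverse `R̄ = Σ_i (ε ∞ e_i) ⊗ ((e_i* ∘ T) ∞ 1)`:
`R R̄ R = R` and `R̄ R R̄ = R̄`. -/
theorem quantumDouble_quasiRMatrix_vonNeumannRegular
    {k : Type} [Field k] {H : Type} [AddCommGroup H] [Module k H]
    [FiniteDimensional k H]
    (B : BialgData k H) (T Tinv : H →ₗ[k] H)
    (hB : B.IsBialgebra) (hT : B.IsWeakAntipode T)
    (hanti : B.IsAntiBialgebraHom T)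
    (hinv₁ : Tinv ∘ₗ T = LinearMap.id) (hinv₂ : T ∘ₗ Tinv = LinearMap.id)
    (hbp : B.Biperfect T)
    (ι : Type) [Fintype ι] (b : Module.Basis ι k H)
    (R Rbar : (Module.Dual k H ⊗[k] H) ⊗[k] (Module.Dual k H ⊗[k] H))
    (hR : R = ∑ i : ι, (B.counit ⊗ₜ b i) ⊗ₜ[k] ((b.coord i) ⊗ₜ B.one))
    (hRbar : Rbar = ∑ i : ι,
      (B.counit ⊗ₜ b i) ⊗ₜ[k] (((b.coord i) ∘ₗ T) ⊗ₜ B.one)) :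
    B.doubleMul2 Tinv (B.doubleMul2 Tinv (R ⊗ₜ Rbar) ⊗ₜ R) = R ∧
    B.doubleMul2 Tinv (B.doubleMul2 Tinv (Rbar ⊗ₜ R) ⊗ₜ Rbar) = Rbar :=
  quantumDouble_quasiRMatrix_vonNeumannRegular_general B T Tinv hB hT hanti hinv₁ hinv₂ ι b R Rbar
    hR hRbar
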